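/- Let (𝔤, d, {−,−}) be a differential graded Lie algebra. Then the derived bracket x ∘ y := {d(x), y} defines a binary operation on 𝔤₋₁ (it maps 𝔤₋₁ × 𝔤₋₁ to 𝔤₋₁) which satisfies the left Leibniz identity: x ∘ (y ∘ z) = (x ∘ y) ∘ z + y ∘ (x ∘ z) for all x, y, z ∈ 𝔤₋₁. -/

import Mathlib

/-- The sign `(-1)^n` for `n : ℤ`, valued in the field `K`. -/
noncomputable def sgn (K : Type*) [Field K] (n : ℤ) : K :=
  ((Int.negOnePow n : ℤ) : K)

/-- An hLie₂-algebra structure on a graded vector space. -/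
structure IsHLie2 (K : Type*) [Field K] [CharZero K] {E : Type*}
    [AddCommGroup E] [Module K E] (G : ℤ → Submodule K E)
    (e1 : E →ₗ[K] E) (e2 : ℤ → E →ₗ[K] E →ₗ[K] E) : Prop where
  /-- `ε₂ⁱ = 0` for `i ∉ {0,1}`. -/
  e2_zero : ∀ i : ℤ, i ≠ 0 → i ≠ 1 → e2 i = 0
  /-- `ε₁` has degree `1`. -/
  e1_deg : ∀ (p : ℤ) (x : E), x ∈ G p → e1 x ∈ G (p + 1)
  /-- `ε₂ⁱ` has degree `-i`. -/
  e2_deg : ∀ (i p q : ℤ) (x y : E), x ∈ G p → y ∈ G q → e2 i x y ∈ G (p + q - i)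
  /-- (R1) -/
  rel1 : ∀ (p : ℤ) (x : E), x ∈ G p → e1 (e1 x) = 0
  /-- (R2) -/
  rel2 : ∀ (i : ℕ) (p q : ℤ) (x₁ x₂ : E), x₁ ∈ G p → x₂ ∈ G q →
    e1 (e2 (i : ℤ) x₁ x₂) =
      sgn K (i : ℤ) • (e2 (i : ℤ) (e1 x₁) x₂ + sgn K p • e2 (i : ℤ) x₁ (e1 x₂))
        + e2 ((i : ℤ) - 1) x₁ x₂ - sgn K ((i : ℤ) + p * q) • e2 ((i : ℤ) - 1) x₂ x₁
  /-- (R3) -/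
  rel3 : ∀ (i : ℕ) (p q r : ℤ) (x₁ x₂ x₃ : E), x₁ ∈ G p → x₂ ∈ G q → x₃ ∈ G r →
    e2 (i : ℤ) (e2 (i : ℤ) x₁ x₂) x₃ =
      sgn K ((i : ℤ) * (p + 1)) • e2 (i : ℤ) x₁ (e2 (i : ℤ) x₂ x₃)
        - sgn K ((p + (i : ℤ)) * q) • e2 (i : ℤ) x₂ (e2 (i : ℤ) x₁ x₃)
        - sgn K ((q + r) * p + ((i : ℤ) - 1) * q) •
            e2 ((i : ℤ) + 1) x₂ (e2 ((i : ℤ) - 1) x₃ x₁)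
  /-- (R4) -/
  rel4 : ∀ (i j : ℕ), j < i → ∀ (p q r : ℤ) (x₁ x₂ x₃ : E),
    x₁ ∈ G p → x₂ ∈ G q → x₃ ∈ G r →
    e2 (j : ℤ) (e2 (i : ℤ) x₁ x₂) x₃ =
      sgn K (1 + (j : ℤ) * ((i : ℤ) + 1) + p * (q + r) + ((j : ℤ) - 1) * q) •
        e2 ((i : ℤ) + 1) x₂ (e2 ((j : ℤ) - 1) x₃ x₁)
  /-- (R5) -/
  rel5 : ∀ (i j : ℕ), j < i → ∀ (p q r : ℤ) (x₁ x₂ x₃ : E),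
    x₁ ∈ G p → x₂ ∈ G q → x₃ ∈ G r →
    e2 (i : ℤ) (e2 (j : ℤ) x₁ x₂) x₃ =
      sgn K ((i : ℤ) * ((j : ℤ) + p)) • e2 (j : ℤ) x₁ (e2 (i : ℤ) x₂ x₃)
        - sgn K ((p + (j : ℤ)) * q) • e2 (i : ℤ) x₂ (e2 (j : ℤ) x₁ x₃)
        - sgn K ((j : ℤ) + r * ((j : ℤ) + q - 1) + p * (q + r)) •
            e2 ((i : ℤ) + 1) x₃ (e2 ((j : ℤ) - 1) x₂ x₁)

/-- A differential graded Lie algebra structure on a graded vector space. -/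
structure IsDGLA (K : Type*) [Field K] {V : Type*} [AddCommGroup V] [Module K V]
    (G : ℤ → Submodule K V) (d : V →ₗ[K] V) (br : V →ₗ[K] V →ₗ[K] V) : Prop where
  d_deg : ∀ (p : ℤ) (x : V), x ∈ G p → d x ∈ G (p + 1)
  d_sq : ∀ (p : ℤ) (x : V), x ∈ G p → d (d x) = 0
  br_deg : ∀ (p q : ℤ) (x y : V), x ∈ G p → y ∈ G q → br x y ∈ G (p + q)
  antisym : ∀ (p q : ℤ) (x y : V), x ∈ G p → y ∈ G q →
    br x y = - (sgn K (p * q) • br y x)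
  jacobi : ∀ (p q r : ℤ) (x y z : V), x ∈ G p → y ∈ G q → z ∈ G r →
    br x (br y z) = br (br x y) z + sgn K (p * q) • br y (br x z)
  leibniz : ∀ (p q : ℤ) (x y : V), x ∈ G p → y ∈ G q →
    d (br x y) = br (d x) y + sgn K p • br x (d y)

/-! For `x` of degree `-1`, `d x` has degree `0`, so `{d x, -}` is a degree-`0` derivation of the
bracket by the Jacobi identity, with no sign. Since `d² = 0`, the Leibniz rule for `d` gives
`d {d x, y} = {d x, d y}`, and the left Leibniz identity is the Jacobi identity for `d x, d y, z`. -/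

theorem sgn_zero (K : Type*) [Field K] : sgn K 0 = 1 := by
  simp [sgn]

namespace IsDGLA

variable {K : Type*} [Field K] {V : Type*} [AddCommGroup V] [Module K V]
  {G : ℤ → Submodule K V} {d : V →ₗ[K] V} {br : V →ₗ[K] V →ₗ[K] V}

theorem br_d_mem (hg : IsDGLA K G d br) {p q : ℤ} {x y : V} (hx : x ∈ G p) (hy : y ∈ G q) :
    br (d x) y ∈ G (p + 1 + q) :=
  hg.br_deg _ _ _ _ (hg.d_deg p x hx) hy

theorem d_br_d (hg : IsDGLA K G d br) {p q : ℤ} {x y : V} (hx : x ∈ G p) (hy : y ∈ G q) :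
    d (br (d x) y) = sgn K (p + 1) • br (d x) (d y) := by
  rw [hg.leibniz _ q _ y (hg.d_deg p x hx) hy, hg.d_sq p x hx, map_zero, LinearMap.zero_apply,
    zero_add]

theorem jacobi_of_mem_zero (hg : IsDGLA K G d br) {q r : ℤ} {x y z : V} (hx : x ∈ G 0)
    (hy : y ∈ G q) (hz : z ∈ G r) :
    br x (br y z) = br (br x y) z + br y (br x z) := by
  rw [hg.jacobi 0 q r x y z hx hy hz, zero_mul, sgn_zero, one_smul]

end IsDGLA

/-- In a differential graded Lie algebra `(𝔤, d, {−,−})`, the derived bracket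
`x ∘ y := {d x, y}` maps `𝔤₋₁ × 𝔤₋₁` to `𝔤₋₁` and satisfies the left Leibniz
identity `x ∘ (y ∘ z) = (x ∘ y) ∘ z + y ∘ (x ∘ z)` on `𝔤₋₁`. -/
theorem derived_bracket_leibniz
    (K : Type*) [Field K] {V : Type*} [AddCommGroup V] [Module K V]
    (G : ℤ → Submodule K V) (d : V →ₗ[K] V) (br : V →ₗ[K] V →ₗ[K] V)
    (hg : IsDGLA K G d br) :
    (∀ x y : V, x ∈ G (-1) → y ∈ G (-1) → br (d x) y ∈ G (-1))
    ∧ (∀ x y z : V, x ∈ G (-1) → y ∈ G (-1) → z ∈ G (-1) →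
        br (d x) (br (d y) z) = br (d (br (d x) y)) z + br (d y) (br (d x) z)) := by
  have hd0 : ∀ {x : V}, x ∈ G (-1) → d x ∈ G 0 := fun hx => by
    simpa using hg.d_deg (-1) _ hx
  refine ⟨fun x y hx hy => by simpa using hg.br_d_mem hx hy, fun x y z hx hy hz => ?_⟩
  rw [hg.d_br_d hx hy, neg_add_cancel, sgn_zero, one_smul]
  exact hg.jacobi_of_mem_zero (hd0 hx) (hd0 hy) hz
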